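/- Let (X, T, D) be a rank-r MGDS satisfying (DC), let J ⊆ {1,…,r}, let X_J = { x ∈ X : σ(x)_j = ∞ if and only if j ∈ J }, and let N ∈ ℕ^r. For x ∈ X_J let τ(x) ∈ ℕ^r be defined by τ(x)_j = σ(x)_j for j ∉ J (which is finite) and τ(x)_j = 0 for j ∈ J. Then for x, y ∈ X_J the following are equivalent: (a) there exist m, n ∈ ℕ^r with m_j = n_j ≤ N_j for all j ∈ J, x ∈ D m, y ∈ D n, and T m x = T n y; (b) there exists n ∈ ℕ^r with n_j = 0 for all j ∉ J and n_j ≤ N_j for all j ∈ J such that x ∈ D (n + τ(x)), y ∈ D (n + τ(y)), and T (n + τ(x)) x = T (n + τ(y)) y. -/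

import Mathlib

/-- A multiply generated dynamical system (MGDS) of rank `r` on a set `X`:
a family of subsets `D n ⊆ X` and maps `T n : X → X` indexed by `n ∈ ℕ^r`
such that `D 0 = X`, `T 0 = id`, `D (m+n) = {x ∈ D n | T n x ∈ D m}` and
`T (m+n) x = T m (T n x)` on `D (m+n)`. -/
structure MGDS (r : ℕ) (X : Type*) where
  D : (Fin r → ℕ) → Set X
  T : (Fin r → ℕ) → X → X
  D_zero : D 0 = Set.univ
  T_zero : ∀ x, T 0 x = x
  D_add : ∀ m n, D (m + n) = {x ∈ D n | T n x ∈ D m}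
  T_add : ∀ m n, ∀ x ∈ D (m + n), T (m + n) x = T m (T n x)

/-- The domain condition (DC): `D m ∩ D n ⊆ D (m ⊔ n)` where `⊔` is the
coordinatewise maximum. -/
def MGDS.DC {r : ℕ} {X : Type*} (S : MGDS r X) : Prop :=
  ∀ m n : Fin r → ℕ, S.D m ∩ S.D n ⊆ S.D (m ⊔ n)

/-- The exit time `σ(x) ∈ (ℕ∞)^r`: coordinatewise,
`σ(x)_j = sup { n_j : n ∈ ℕ^r, x ∈ D n }`, the supremum taken in `ℕ∞`. -/
noncomputable def MGDS.exitTime {r : ℕ} {X : Type*} (S : MGDS r X) (x : X) : Fin r → ℕ∞ :=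
  fun j => ⨆ (n : Fin r → ℕ) (_ : x ∈ S.D n), (n j : ℕ∞)

/-!
Under (DC) the domains are cut out by the exit time: `x ∈ D t ↔ t ≤ σ(x)`, and moving along the
system lowers the exit time exactly, `σ(T m x) + m = σ(x)`. Given `T m x = T n y = z`, push both
points further by the finite part `a` of `σ(z)` (zero on `J`): then `a + m` and `a + n` agree on `J`
with `m = n`, and off `J` they equal `σ(z) + m = σ(x) = τ(x)` and `σ(z) + n = σ(y) = τ(y)`.
-/

namespace MGDS

variable {r : ℕ} {X : Type*} (S : MGDS r X)

theorem mem_D_zero (x : X) : x ∈ S.D 0 := S.D_zero ▸ Set.mem_univ x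

theorem mem_D_add_iff {m n : Fin r → ℕ} {x : X} :
    x ∈ S.D (m + n) ↔ x ∈ S.D n ∧ S.T n x ∈ S.D m := by
  rw [S.D_add]
  rfl

theorem D_antitone {m k : Fin r → ℕ} (h : m ≤ k) : S.D k ⊆ S.D m := by
  intro x hx
  rw [← tsub_add_cancel_of_le h, mem_D_add_iff] at hx
  exact hx.1

theorem le_exitTime {n : Fin r → ℕ} {x : X} (hn : x ∈ S.D n) (j : Fin r) :
    (n j : ℕ∞) ≤ S.exitTime x j :=
  le_iSup₂_of_le n hn le_rfl

theorem exists_mem_D_le_apply {x : X} {j : Fin r} {t : ℕ} (ht : (t : ℕ∞) ≤ S.exitTime x j) :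
    ∃ k, x ∈ S.D k ∧ t ≤ k j := by
  obtain _ | s := t
  · exact ⟨0, S.mem_D_zero x, Nat.zero_le _⟩
  · have hs : (s : ℕ∞) < S.exitTime x j := lt_of_lt_of_le (by exact_mod_cast s.lt_succ_self) ht
    simp only [exitTime, lt_iSup_iff] at hs
    obtain ⟨k, hk, hsk⟩ := hs
    exact ⟨k, hk, by exact_mod_cast hsk⟩

variable {S}

theorem DC.mem_D_finset_sup (hDC : S.DC) {x : X} {ι : Type*} {s : Finset ι}
    {k : ι → Fin r → ℕ} (hk : ∀ i ∈ s, x ∈ S.D (k i)) : x ∈ S.D (s.sup k) :=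
  Finset.sup_induction (p := fun c => x ∈ S.D c) (S.mem_D_zero x)
    (fun _ h₁ _ h₂ => hDC _ _ ⟨h₁, h₂⟩) hk

theorem DC.mem_D_of_le_exitTime (hDC : S.DC) {x : X} {t : Fin r → ℕ}
    (ht : ∀ j, (t j : ℕ∞) ≤ S.exitTime x j) : x ∈ S.D t := by
  choose k hk htk using fun j => S.exists_mem_D_le_apply (ht j)
  refine S.D_antitone (fun j => (htk j).trans ?_)
    (hDC.mem_D_finset_sup (s := Finset.univ) fun j _ => hk j)
  exact Finset.le_sup (f := k) (Finset.mem_univ j) j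

theorem DC.exitTime_T_add (hDC : S.DC) {m : Fin r → ℕ} {x : X} (hx : x ∈ S.D m) (j : Fin r) :
    S.exitTime (S.T m x) j + m j = S.exitTime x j := by
  rw [exitTime, ENat.biSup_add' (p := fun c => S.T m x ∈ S.D c) ⟨0, S.mem_D_zero _⟩]
  refine le_antisymm (iSup₂_le fun c hc => ?_) (iSup₂_le fun n hn => ?_)
  · exact_mod_cast S.le_exitTime (S.mem_D_add_iff.2 ⟨hx, hc⟩) j
  · -- (DC) gives `x ∈ D (n ⊔ m)`, so `T m x ∈ D c` for `c := n ⊔ m - m`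
    have hnm : x ∈ S.D ((n ⊔ m - m) + m) := by
      rw [tsub_add_cancel_of_le le_sup_right]
      exact hDC n m ⟨hn, hx⟩
    refine le_iSup₂_of_le (n ⊔ m - m) (S.mem_D_add_iff.1 hnm).2 ?_
    have : n j ≤ (n ⊔ m - m) j + m j := by simp only [Pi.sub_apply, Pi.sup_apply]; omega
    exact_mod_cast this

theorem mem_D_add_and_T_add_eq_of_T_eq {m n a : Fin r → ℕ} {x y : X} (hx : x ∈ S.D m)
    (hy : y ∈ S.D n) (hT : S.T m x = S.T n y) (ha : S.T m x ∈ S.D a) :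
    x ∈ S.D (a + m) ∧ y ∈ S.D (a + n) ∧ S.T (a + m) x = S.T (a + n) y := by
  have hxa : x ∈ S.D (a + m) := S.mem_D_add_iff.2 ⟨hx, ha⟩
  have hya : y ∈ S.D (a + n) := S.mem_D_add_iff.2 ⟨hy, hT ▸ ha⟩
  exact ⟨hxa, hya, by rw [S.T_add a m x hxa, S.T_add a n y hya, hT]⟩

theorem DC.indicator_compl_toNat_exitTime_add (hDC : S.DC) {J : Set (Fin r)} {m t : Fin r → ℕ}
    {x : X} (hx : x ∈ S.D m)
    (ht : ∀ j, (j ∈ J → t j = 0) ∧ (j ∉ J → (t j : ℕ∞) = S.exitTime x j)) :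
    Jᶜ.indicator (fun j => (S.exitTime (S.T m x) j).toNat) + m = J.indicator m + t := by
  funext j
  by_cases hj : j ∈ J
  · simp [hj, (ht j).1 hj]
  · have hσ := hDC.exitTime_T_add hx j
    rw [← (ht j).2 hj] at hσ
    have hfin : S.exitTime (S.T m x) j ≠ ⊤ := fun h => by simp [h] at hσ
    obtain ⟨s, hs⟩ := ENat.ne_top_iff_exists.1 hfin
    rw [← hs] at hσ
    rw [Pi.add_apply, Set.indicator_of_mem (Set.mem_compl hj), ← hs, ENat.toNat_natCast]
    simp only [Pi.add_apply, Set.indicator_of_notMem hj, zero_add]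
    exact_mod_cast hσ

end MGDS

/-- in an MGDS with (DC), for `x, y ∈ X_J` and `N ∈ ℕ^r`, the
defining condition of `R_J^N` (existence of `m, n` with `m_j = n_j ≤ N_j` on `J`,
`x ∈ D m`, `y ∈ D n`, `T m x = T n y`) is equivalent to the normalized form:
existence of `n` supported on `J` with `n_j ≤ N_j` on `J` such that
`x ∈ D (n + τ(x))`, `y ∈ D (n + τ(y))` and `T (n + τ(x)) x = T (n + τ(y)) y`,
where `τ(x)_j = σ(x)_j` for `j ∉ J` (finite) and `τ(x)_j = 0` for `j ∈ J`. -/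
theorem mgds_RJN_normal_form
    {r : ℕ} {X : Type*} (S : MGDS r X) (hDC : S.DC) (J : Set (Fin r))
    (τ : X → (Fin r → ℕ))
    (hτ : ∀ x ∈ ({x | ∀ j, S.exitTime x j = ⊤ ↔ j ∈ J} : Set X), ∀ j,
      (j ∈ J → τ x j = 0) ∧ (j ∉ J → (τ x j : ℕ∞) = S.exitTime x j))
    (N : Fin r → ℕ) (x y : X)
    (hx : x ∈ ({x | ∀ j, S.exitTime x j = ⊤ ↔ j ∈ J} : Set X))
    (hy : y ∈ ({x | ∀ j, S.exitTime x j = ⊤ ↔ j ∈ J} : Set X)) :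
    (∃ m n : Fin r → ℕ, (∀ j ∈ J, m j = n j ∧ n j ≤ N j) ∧
      x ∈ S.D m ∧ y ∈ S.D n ∧ S.T m x = S.T n y) ↔
    (∃ n : Fin r → ℕ, (∀ j ∉ J, n j = 0) ∧ (∀ j ∈ J, n j ≤ N j) ∧
      x ∈ S.D (n + τ x) ∧ y ∈ S.D (n + τ y) ∧
      S.T (n + τ x) x = S.T (n + τ y) y) := by
  constructor
  · rintro ⟨m, n, hmn, hxm, hyn, hT⟩
    set a := Jᶜ.indicator fun j => (S.exitTime (S.T m x) j).toNat
    have ha : S.T m x ∈ S.D a := hDC.mem_D_of_le_exitTime fun j => by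
      by_cases hj : j ∈ J <;> simp [a, hj, ENat.natCast_toNat_le_self]
    obtain ⟨hxa, hya, hTa⟩ := S.mem_D_add_and_T_add_eq_of_T_eq hxm hyn hT ha
    have hpx : a + m = J.indicator m + τ x :=
      hDC.indicator_compl_toNat_exitTime_add hxm (hτ x hx)
    have hpy : a + n = J.indicator m + τ y := by
      rw [Set.indicator_congr fun j hj => (hmn j hj).1]
      simp only [a, hT]
      exact hDC.indicator_compl_toNat_exitTime_add hyn (hτ y hy)
    refine ⟨J.indicator m, fun j hj => Set.indicator_of_notMem hj m, fun j hj => ?_,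
      hpx ▸ hxa, hpy ▸ hya, hpx ▸ hpy ▸ hTa⟩
    rw [Set.indicator_of_mem hj, (hmn j hj).1]
    exact (hmn j hj).2
  · rintro ⟨n, -, hnN, hxn, hyn, hT⟩
    refine ⟨n + τ x, n + τ y, fun j hj => ?_, hxn, hyn, hT⟩
    simp [(hτ x hx j).1 hj, (hτ y hy j).1 hj, hnN j hj]
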